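/- Let r ∈ (0,1] and let p^{(r)} be the unique zero of f^{(r)} in Δ. Then lim_{t→∞} sup{ |y^{(r)}(t,p₀) − p^{(r)}| : p₀ ∈ Δ } = 0; that is, the solution of the replicator-mutation differential equation converges to p^{(r)} as t → ∞, uniformly in the initial state p₀. -/

import Mathlib

open Finset Set Filter

/-- The L¹ distance on `ℝ^d`. -/
noncomputable def l1dist {m : ℕ} (x y : Fin m → ℝ) : ℝ := ∑ i, |x i - y i|

/-- The unit simplex in `ℝ^d`. -/
def unitSimplex (d : ℕ) : Set (Fin d → ℝ) := {x | (∀ i, 0 ≤ x i) ∧ ∑ i, x i = 1}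

/-- The vector field `f^{(r)}` with `f^{(r)}_i(p) = 2(1−r) p_i (M̃p)_i + r(1/d − p_i)`. -/
noncomputable def fvec (d : ℕ) (Mt : Matrix (Fin d) (Fin d) ℝ) (r : ℝ) :
    (Fin d → ℝ) → Fin d → ℝ :=
  fun p i => 2 * (1 - r) * p i * Mt.mulVec p i + r * (1 / (d : ℝ) - p i)

/-!
The relative entropy `V(t) = ∑ pᵢ log (pᵢ / yᵢ(t))` of the zero `p = p^{(r)}` with respect to a
trajectory `y` is a Lyapunov function. Since `fᵢ(q) ≥ r/d - 2qᵢ` on the simplex, from time `1` on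
every coordinate of every trajectory is at least `r/(4d)`, so `V(1) ≤ log (4d/r)` whatever `p₀` is.
By skew-symmetry of `M̃` the replicator terms cancel in `V' = -∑ pᵢ fᵢ(y)/yᵢ`, leaving
`V' = -(r/d) ∑ (yᵢ - pᵢ)²/(yᵢ pᵢ) ≤ -(r/d) χ²(p‖y) ≤ -(r/d) V`; hence `V` decays exponentially at a
rate independent of `p₀`. Finally `|y - p|² ≤ 4 V`, through the Hellinger distance.
-/

open scoped Matrix

lemma le_gronwallBound_of_hasDerivWithinAt_Ici {f f' : ℝ → ℝ} {a δ K ε : ℝ}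
    (hf : ∀ t ∈ Ici a, HasDerivWithinAt f (f' t) (Ici a) t) (ha : f a ≤ δ)
    (bound : ∀ t ∈ Ici a, f' t ≤ K * f t + ε) {t : ℝ} (ht : a ≤ t) :
    f t ≤ gronwallBound δ K ε (t - a) :=
  le_gronwallBound_of_liminf_deriv_right_le
    (fun x hx => (hf x hx.1).continuousWithinAt.mono Icc_subset_Ici_self)
    (fun x hx _ hr => ((hf x hx.1).mono (Ici_subset_Ici.2 hx.1)).liminf_right_slope_le hr)
    ha (fun x hx => bound x hx.1) t ⟨ht, le_rfl⟩

lemma dotProduct_mulVec_eq_neg_of_skew {ι R : Type*} [Fintype ι] [CommRing R]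
    {M : Matrix ι ι R} (hskew : ∀ i j, M j i = -M i j) (p q : ι → R) :
    q ⬝ᵥ M *ᵥ p = -(p ⬝ᵥ M *ᵥ q) := by
  have hT : Mᵀ = -M := Matrix.ext fun i j => hskew i j
  rw [Matrix.dotProduct_mulVec, ← Matrix.mulVec_transpose, hT, Matrix.neg_mulVec,
    dotProduct_comm, dotProduct_neg]

section RelEntropy

variable {ι : Type*} [Fintype ι]

noncomputable def relEntropy (p q : ι → ℝ) : ℝ := ∑ i, p i * (Real.log (p i) - Real.log (q i))

lemma relEntropy_le_sum_sq_div {p q : ι → ℝ} (hp : ∀ i, 0 < p i) (hq : ∀ i, 0 < q i)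
    (hsum : ∑ i, p i = ∑ i, q i) : relEntropy p q ≤ ∑ i, (p i - q i) ^ 2 / q i := by
  have hterm : ∀ i,
      p i * (Real.log (p i) - Real.log (q i)) ≤ (p i - q i) ^ 2 / q i + (p i - q i) := by
    intro i
    have hqi := (hq i).ne'
    have hlog := Real.log_le_sub_one_of_pos (div_pos (hp i) (hq i))
    rw [Real.log_div (hp i).ne' (hq i).ne'] at hlog
    calc p i * (Real.log (p i) - Real.log (q i)) ≤ p i * (p i / q i - 1) :=
          mul_le_mul_of_nonneg_left hlog (hp i).le
      _ = (p i - q i) ^ 2 / q i + (p i - q i) := by field_simp; ring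
  calc relEntropy p q ≤ ∑ i, ((p i - q i) ^ 2 / q i + (p i - q i)) := sum_le_sum fun i _ => hterm i
    _ = ∑ i, (p i - q i) ^ 2 / q i := by
        rw [sum_add_distrib, sum_sub_distrib, hsum, sub_self, add_zero]

lemma relEntropy_le_neg_log {p q : ι → ℝ} {c : ℝ} (hp : ∀ i, 0 ≤ p i) (hp1 : ∑ i, p i = 1)
    (hc : 0 < c) (hq : ∀ i, c ≤ q i) : relEntropy p q ≤ -Real.log c := by
  have hterm : ∀ i, p i * (Real.log (p i) - Real.log (q i)) ≤ p i * -Real.log c := by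
    intro i
    have hlogp : Real.log (p i) ≤ 0 :=
      Real.log_nonpos (hp i) (hp1 ▸ single_le_sum (fun j _ => hp j) (mem_univ i))
    have hlogq : Real.log c ≤ Real.log (q i) := Real.log_le_log hc (hq i)
    exact mul_le_mul_of_nonneg_left (by linarith) (hp i)
  calc relEntropy p q ≤ ∑ i, p i * -Real.log c := sum_le_sum fun i _ => hterm i
    _ = -Real.log c := by rw [← sum_mul, hp1, one_mul]

/-- Termwise, `log x ≤ 2 (√x - 1)` at `x = qᵢ / pᵢ`. -/
lemma sum_sq_sqrt_sub_le_relEntropy {p q : ι → ℝ} (hp : ∀ i, 0 < p i) (hq : ∀ i, 0 < q i)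
    (hsum : ∑ i, p i = ∑ i, q i) : ∑ i, (√(q i) - √(p i)) ^ 2 ≤ relEntropy p q := by
  have hterm : ∀ i, (√(q i) - √(p i)) ^ 2 + (p i - q i) ≤
      p i * (Real.log (p i) - Real.log (q i)) := by
    intro i
    set a := √(p i)
    set b := √(q i)
    have ha : 0 < a := Real.sqrt_pos.2 (hp i)
    have hb : 0 < b := Real.sqrt_pos.2 (hq i)
    have hpa : p i = a ^ 2 := (Real.sq_sqrt (hp i).le).symm
    have hqb : q i = b ^ 2 := (Real.sq_sqrt (hq i).le).symm
    have hlog := Real.log_le_sub_one_of_pos (div_pos hb ha)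
    rw [Real.log_div hb.ne' ha.ne'] at hlog
    have hmul : a ^ 2 * (b / a - 1) = a * b - a ^ 2 := by field_simp
    rw [hpa, hqb, Real.log_pow, Real.log_pow]
    push_cast
    nlinarith [mul_le_mul_of_nonneg_left hlog (sq_nonneg a)]
  calc ∑ i, (√(q i) - √(p i)) ^ 2
      = ∑ i, ((√(q i) - √(p i)) ^ 2 + (p i - q i)) := by
        rw [sum_add_distrib, sum_sub_distrib, hsum, sub_self, add_zero]
    _ ≤ relEntropy p q := sum_le_sum fun i _ => hterm i

lemma hasDerivWithinAt_relEntropy {p : ι → ℝ} {y : ℝ → ι → ℝ} {y' : ι → ℝ} {s : Set ℝ} {t : ℝ}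
    (hy : HasDerivWithinAt y y' s t) (hyt : ∀ i, y t i ≠ 0) :
    HasDerivWithinAt (fun u => relEntropy p (y u)) (-∑ i, p i * (y' i / y t i)) s t := by
  have hterm : ∀ i ∈ Finset.univ,
      HasDerivWithinAt (fun u => p i * (Real.log (p i) - Real.log (y u i)))
        (p i * (0 - y' i / y t i)) s t := fun i _ =>
    ((hasDerivWithinAt_const t s _).sub ((hasDerivWithinAt_pi.1 hy i).log (hyt i))).const_mul _
  exact (HasDerivWithinAt.fun_sum hterm).congr_deriv
    (by simp only [zero_sub, mul_neg, sum_neg_distrib])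

end RelEntropy

lemma sq_l1dist_le_four_mul_sum_sq_sqrt_sub {m : ℕ} {p q : Fin m → ℝ}
    (hp : p ∈ unitSimplex m) (hq : q ∈ unitSimplex m) :
    l1dist p q ^ 2 ≤ 4 * ∑ i, (√(p i) - √(q i)) ^ 2 := by
  have hfactor : ∀ i, |p i - q i| = |√(p i) - √(q i)| * (√(p i) + √(q i)) := by
    intro i
    have hdiff : p i - q i = (√(p i) - √(q i)) * (√(p i) + √(q i)) := by
      linear_combination (-1 : ℝ) * Real.sq_sqrt (hp.1 i) + Real.sq_sqrt (hq.1 i)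
    rw [hdiff, abs_mul, abs_of_nonneg (by positivity : 0 ≤ √(p i) + √(q i))]
  have hsum_sq : ∑ i, (√(p i) + √(q i)) ^ 2 ≤ 4 := by
    calc ∑ i, (√(p i) + √(q i)) ^ 2 ≤ ∑ i, 2 * (p i + q i) := by
          refine sum_le_sum fun i _ => ?_
          nlinarith [sq_nonneg (√(p i) - √(q i)), Real.sq_sqrt (hp.1 i), Real.sq_sqrt (hq.1 i)]
      _ = 4 := by rw [← mul_sum, sum_add_distrib, hp.2, hq.2]; norm_num
  calc l1dist p q ^ 2 = (∑ i, |√(p i) - √(q i)| * (√(p i) + √(q i))) ^ 2 := by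
        simp only [l1dist, hfactor]
    _ ≤ (∑ i, |√(p i) - √(q i)| ^ 2) * ∑ i, (√(p i) + √(q i)) ^ 2 :=
        sum_mul_sq_le_sq_mul_sq _ _ _
    _ ≤ 4 * ∑ i, (√(p i) - √(q i)) ^ 2 := by
        simp only [sq_abs]
        rw [mul_comm]
        exact mul_le_mul_of_nonneg_right hsum_sq (sum_nonneg fun i _ => sq_nonneg _)

section Simplex

variable {d : ℕ}

lemma pos_of_mem_unitSimplex {p : Fin d → ℝ} (hp : p ∈ unitSimplex d) : 0 < d := by
  rcases Nat.eq_zero_or_pos d with rfl | hd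
  · simpa using hp.2
  · exact hd

lemma le_one_of_mem_unitSimplex {p : Fin d → ℝ} (hp : p ∈ unitSimplex d) (i : Fin d) :
    p i ≤ 1 :=
  hp.2 ▸ single_le_sum (fun j _ => hp.1 j) (mem_univ i)

lemma abs_mulVec_le_one {M : Matrix (Fin d) (Fin d) ℝ} (hM : ∀ i j, |M i j| ≤ 1)
    {p : Fin d → ℝ} (hp : p ∈ unitSimplex d) (i : Fin d) : |(M *ᵥ p) i| ≤ 1 :=
  calc |(M *ᵥ p) i| = |∑ j, M i j * p j| := rfl
    _ ≤ ∑ j, |M i j * p j| := abs_sum_le_sum_abs _ _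
    _ ≤ ∑ j, p j := sum_le_sum fun j _ => by
        rw [abs_mul, abs_of_nonneg (hp.1 j)]
        exact mul_le_of_le_one_left (hp.1 j) (hM i j)
    _ = 1 := hp.2

end Simplex

section VectorField

variable {d : ℕ} {Mt : Matrix (Fin d) (Fin d) ℝ} {r : ℝ}

lemma div_sub_two_mul_le_fvec (hbound : ∀ i j, |Mt i j| ≤ 1) (hr0 : 0 ≤ r) (hr1 : r ≤ 1)
    {p : Fin d → ℝ} (hp : p ∈ unitSimplex d) (i : Fin d) :
    r / d - 2 * p i ≤ fvec d Mt r p i := by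
  have hMp := (abs_le.1 (abs_mulVec_le_one hbound hp i)).1
  have hgain : 0 ≤ 2 * (1 - r) * p i * ((Mt *ᵥ p) i + 1) :=
    mul_nonneg (mul_nonneg (by linarith) (hp.1 i)) (by linarith)
  have hmut : r * (1 / d - p i) = r / d - r * p i := by ring
  simp only [fvec, hmut]
  nlinarith [mul_nonneg hr0 (hp.1 i)]

lemma pos_of_fvec_eq_zero (hbound : ∀ i j, |Mt i j| ≤ 1) (hr0 : 0 < r) (hr1 : r ≤ 1)
    {p : Fin d → ℝ} (hp : p ∈ unitSimplex d) (hpz : fvec d Mt r p = 0) (i : Fin d) :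
    0 < p i := by
  have hd : (0 : ℝ) < d := Nat.cast_pos.2 (pos_of_mem_unitSimplex hp)
  have h := div_sub_two_mul_le_fvec hbound hr0.le hr1 hp i
  rw [hpz, Pi.zero_apply] at h
  linarith [div_pos hr0 hd]

lemma sum_mul_fvec_div_eq (hskew : ∀ i j, Mt j i = -Mt i j) {p q : Fin d → ℝ}
    (hp : p ∈ unitSimplex d) (hq : q ∈ unitSimplex d) (hp0 : ∀ i, 0 < p i)
    (hq0 : ∀ i, 0 < q i) (hqz : fvec d Mt r q = 0) :
    ∑ i, q i * (fvec d Mt r p i / p i) = r / d * ∑ i, (p i - q i) ^ 2 / (p i * q i) := by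
  have hd : (d : ℝ) ≠ 0 := (Nat.cast_pos.2 (pos_of_mem_unitSimplex hp)).ne'
  have hzero : ∀ i, 2 * (1 - r) * (Mt *ᵥ q) i = -(r * (1 / d - q i)) / q i := by
    intro i
    have h := congrFun hqz i
    simp only [fvec, Pi.zero_apply] at h
    rw [eq_div_iff (hq0 i).ne']
    linear_combination h
  have hcross := dotProduct_mulVec_eq_neg_of_skew hskew p q
  calc ∑ i, q i * (fvec d Mt r p i / p i)
      = 2 * (1 - r) * (q ⬝ᵥ Mt *ᵥ p) + ∑ i, r * q i * (1 / d - p i) / p i := by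
        simp only [dotProduct, mul_sum, ← sum_add_distrib]
        refine sum_congr rfl fun i _ => ?_
        have := (hp0 i).ne'
        simp only [fvec]
        field_simp
    _ = ∑ i, (p i * (-(2 * (1 - r) * (Mt *ᵥ q) i)) + r * q i * (1 / d - p i) / p i) := by
        rw [hcross, sum_add_distrib, dotProduct, mul_neg, mul_sum, ← sum_neg_distrib]
        congr 1
        exact sum_congr rfl fun i _ => by ring
    _ = ∑ i, (r / d * ((p i - q i) ^ 2 / (p i * q i)) + r * (2 / d - p i - q i)) := by
        refine sum_congr rfl fun i _ => ?_
        have := (hp0 i).ne'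
        have := (hq0 i).ne'
        rw [hzero i]
        field_simp
        ring
    _ = r / d * ∑ i, (p i - q i) ^ 2 / (p i * q i) := by
        rw [sum_add_distrib, ← mul_sum, ← mul_sum, sum_sub_distrib, sum_sub_distrib, hp.2, hq.2,
          sum_const, card_univ, Fintype.card_fin, nsmul_eq_mul]
        field_simp
        ring

end VectorField

section Trajectory

variable {d : ℕ} {Mt : Matrix (Fin d) (Fin d) ℝ} {r : ℝ}

lemma div_mul_relEntropy_le_sum_mul_fvec_div (hskew : ∀ i j, Mt j i = -Mt i j) (hr0 : 0 ≤ r)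
    {p q : Fin d → ℝ} (hp : p ∈ unitSimplex d) (hq : q ∈ unitSimplex d) (hp0 : ∀ i, 0 < p i)
    (hq0 : ∀ i, 0 < q i) (hqz : fvec d Mt r q = 0) :
    r / d * relEntropy q p ≤ ∑ i, q i * (fvec d Mt r p i / p i) := by
  rw [sum_mul_fvec_div_eq hskew hp hq hp0 hq0 hqz]
  refine mul_le_mul_of_nonneg_left ?_ (by positivity)
  calc relEntropy q p ≤ ∑ i, (q i - p i) ^ 2 / p i :=
        relEntropy_le_sum_sq_div hq0 hp0 (by rw [hp.2, hq.2])
    _ ≤ ∑ i, (p i - q i) ^ 2 / (p i * q i) := sum_le_sum fun i _ => by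
        rw [← neg_sub, neg_sq]
        exact div_le_div_of_nonneg_left (sq_nonneg _) (mul_pos (hp0 i) (hq0 i))
          (mul_le_of_le_one_right (hp0 i).le (le_one_of_mem_unitSimplex hq i))

variable {z : ℝ → Fin d → ℝ}

lemma le_trajectory_coord (hbound : ∀ i j, |Mt i j| ≤ 1) (hr0 : 0 ≤ r) (hr1 : r ≤ 1)
    (hzΔ : ∀ t ∈ Ici (0 : ℝ), z t ∈ unitSimplex d)
    (hz' : ∀ t ∈ Ici (0 : ℝ), HasDerivWithinAt z (fvec d Mt r (z t)) (Ici 0) t)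
    (i : Fin d) {t : ℝ} (ht : 0 ≤ t) :
    r / (2 * d) * (1 - Real.exp (-2 * t)) ≤ z t i := by
  have h := le_gronwallBound_of_hasDerivWithinAt_Ici (f := fun s => -z s i) (δ := 0) (K := -2)
    (ε := -(r / d)) (fun s hs => (hasDerivWithinAt_pi.1 (hz' s hs) i).neg)
    (by simpa using (hzΔ 0 self_mem_Ici).1 i)
    (fun s hs => by linarith [div_sub_two_mul_le_fvec hbound hr0 hr1 (hzΔ s hs) i]) ht
  rw [gronwallBound_of_K_ne_0 (by norm_num), sub_zero] at h
  linear_combination h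

lemma div_four_mul_le_trajectory_coord (hbound : ∀ i j, |Mt i j| ≤ 1) (hr0 : 0 ≤ r)
    (hr1 : r ≤ 1) (hzΔ : ∀ t ∈ Ici (0 : ℝ), z t ∈ unitSimplex d)
    (hz' : ∀ t ∈ Ici (0 : ℝ), HasDerivWithinAt z (fvec d Mt r (z t)) (Ici 0) t)
    (i : Fin d) {t : ℝ} (ht : 1 ≤ t) :
    r / (4 * d) ≤ z t i := by
  have hexp : Real.exp (-2 * t) ≤ 1 / 2 :=
    (Real.exp_le_exp.2 (by linarith)).trans Real.exp_neg_one_lt_half.le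
  have hrd : 0 ≤ r / (2 * d) := by positivity
  calc r / (4 * d) = r / (2 * d) * (1 - 1 / 2) := by ring
    _ ≤ r / (2 * d) * (1 - Real.exp (-2 * t)) := by gcongr
    _ ≤ z t i := le_trajectory_coord hbound hr0 hr1 hzΔ hz' i (by linarith)

lemma relEntropy_trajectory_le (hskew : ∀ i j, Mt j i = -Mt i j)
    (hbound : ∀ i j, |Mt i j| ≤ 1) (hr0 : 0 < r) (hr1 : r ≤ 1) {q : Fin d → ℝ}
    (hq : q ∈ unitSimplex d) (hqz : fvec d Mt r q = 0)
    (hzΔ : ∀ t ∈ Ici (0 : ℝ), z t ∈ unitSimplex d)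
    (hz' : ∀ t ∈ Ici (0 : ℝ), HasDerivWithinAt z (fvec d Mt r (z t)) (Ici 0) t)
    {t : ℝ} (ht : 1 ≤ t) :
    relEntropy q (z t) ≤ -Real.log (r / (4 * d)) * Real.exp (-(r / d) * (t - 1)) := by
  have hd : (0 : ℝ) < d := Nat.cast_pos.2 (pos_of_mem_unitSimplex hq)
  have hq0 := pos_of_fvec_eq_zero hbound hr0 hr1 hq hqz
  have hzc : ∀ s ∈ Ici (1 : ℝ), ∀ i, r / (4 * d) ≤ z s i := fun s hs i =>
    div_four_mul_le_trajectory_coord hbound hr0.le hr1 hzΔ hz' i hs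
  have hz0 : ∀ s ∈ Ici (1 : ℝ), ∀ i, 0 < z s i := fun s hs i =>
    lt_of_lt_of_le (by positivity) (hzc s hs i)
  have hzΔ1 : ∀ s ∈ Ici (1 : ℝ), z s ∈ unitSimplex d := fun s hs =>
    hzΔ s (Set.mem_Ici.2 (zero_le_one.trans hs))
  have hderiv : ∀ s ∈ Ici (1 : ℝ), HasDerivWithinAt (fun u => relEntropy q (z u))
      (-∑ i, q i * (fvec d Mt r (z s) i / z s i)) (Ici 1) s := fun s hs =>
    hasDerivWithinAt_relEntropy ((hz' s (Set.mem_Ici.2 (zero_le_one.trans hs))).mono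
      (Ici_subset_Ici.2 zero_le_one)) fun i => (hz0 s hs i).ne'
  have h := le_gronwallBound_of_hasDerivWithinAt_Ici (K := -(r / d)) (ε := 0) hderiv
    (relEntropy_le_neg_log hq.1 hq.2 (by positivity) (hzc 1 self_mem_Ici))
    (fun s hs => by
      linarith [div_mul_relEntropy_le_sum_mul_fvec_div hskew hr0.le (hzΔ1 s hs) hq (hz0 s hs)
        hq0 hqz])
    ht
  rwa [gronwallBound_ε0] at h

lemma sq_l1dist_trajectory_le (hskew : ∀ i j, Mt j i = -Mt i j)
    (hbound : ∀ i j, |Mt i j| ≤ 1) (hr0 : 0 < r) (hr1 : r ≤ 1) {q : Fin d → ℝ}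
    (hq : q ∈ unitSimplex d) (hqz : fvec d Mt r q = 0)
    (hzΔ : ∀ t ∈ Ici (0 : ℝ), z t ∈ unitSimplex d)
    (hz' : ∀ t ∈ Ici (0 : ℝ), HasDerivWithinAt z (fvec d Mt r (z t)) (Ici 0) t)
    {t : ℝ} (ht : 1 ≤ t) :
    l1dist (z t) q ^ 2 ≤ 4 * (-Real.log (r / (4 * d)) * Real.exp (-(r / d) * (t - 1))) := by
  have hd : (0 : ℝ) < d := Nat.cast_pos.2 (pos_of_mem_unitSimplex hq)
  have hzt0 : ∀ i, 0 < z t i := fun i =>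
    lt_of_lt_of_le (by positivity) (div_four_mul_le_trajectory_coord hbound hr0.le hr1 hzΔ hz' i ht)
  have hzt := hzΔ t (Set.mem_Ici.2 (zero_le_one.trans ht))
  calc l1dist (z t) q ^ 2 ≤ 4 * ∑ i, (√(z t i) - √(q i)) ^ 2 :=
        sq_l1dist_le_four_mul_sum_sq_sqrt_sub hzt hq
    _ ≤ 4 * relEntropy q (z t) := by
        gcongr
        exact sum_sq_sqrt_sub_le_relEntropy (pos_of_fvec_eq_zero hbound hr0 hr1 hq hqz) hzt0
          (by rw [hq.2, hzt.2])
    _ ≤ _ := by gcongr; exact relEntropy_trajectory_le hskew hbound hr0 hr1 hq hqz hzΔ hz' ht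

end Trajectory

lemma tendsto_biSup_nhds_zero_of_le {α β : Type*} {l : Filter β} {s : Set α} {F : α → β → ℝ}
    {g : β → ℝ} (hF : ∀ a ∈ s, ∀ t, 0 ≤ F a t) (hg : Tendsto g l (nhds 0)) (hg0 : ∀ t, 0 ≤ g t)
    (hle : ∀ᶠ t in l, ∀ a ∈ s, F a t ≤ g t) :
    Tendsto (fun t => ⨆ a ∈ s, F a t) l (nhds 0) :=
  tendsto_of_tendsto_of_tendsto_of_le_of_le' tendsto_const_nhds hg
    (Eventually.of_forall fun t => Real.iSup_nonneg fun a => Real.iSup_nonneg fun ha => hF a ha t)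
    (hle.mono fun t ht => Real.iSup_le (fun a => Real.iSup_le (ht a) (hg0 t)) (hg0 t))

theorem stmt6_general (d : ℕ) (Mt : Matrix (Fin d) (Fin d) ℝ)
    (hskew : ∀ i j, Mt j i = - Mt i j) (hbound : ∀ i j, |Mt i j| ≤ 1)
    (r : ℝ) (hr0 : 0 < r) (hr1 : r ≤ 1)
    -- `pr` is the (unique) zero of `f^{(r)}` in the simplex
    (pr : Fin d → ℝ) (hpr : pr ∈ unitSimplex d) (hprz : fvec d Mt r pr = 0)
    -- `y p₀` is the solution of `y' = f^{(r)}(y)` with `y(0) = p₀`, for each `p₀ ∈ Δ`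
    (y : (Fin d → ℝ) → ℝ → Fin d → ℝ)
    (hyΔ : ∀ p₀ ∈ unitSimplex d, ∀ t ∈ Ici (0 : ℝ), y p₀ t ∈ unitSimplex d)
    (hyD : ∀ p₀ ∈ unitSimplex d, ∀ t ∈ Ici (0 : ℝ),
      HasDerivWithinAt (y p₀) (fvec d Mt r (y p₀ t)) (Ici 0) t) :
    Tendsto (fun t : ℝ => ⨆ p₀ ∈ unitSimplex d, l1dist (y p₀ t) pr) atTop (nhds 0) := by
  set decay : ℝ → ℝ := fun t => 4 * (-Real.log (r / (4 * d)) * Real.exp (-(r / d) * (t - 1)))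
  have hdecay : Tendsto decay atTop (nhds 0) := by
    have hd : (0 : ℝ) < d := Nat.cast_pos.2 (pos_of_mem_unitSimplex hpr)
    have hexp : Tendsto (fun t : ℝ => Real.exp (-(r / d) * (t - 1))) atTop (nhds 0) :=
      Real.tendsto_exp_atBot.comp <|
        (tendsto_atTop_add_const_right _ _ tendsto_id).const_mul_atTop_of_neg
          (neg_lt_zero.2 (div_pos hr0 hd))
    simpa [decay] using (hexp.const_mul (-Real.log (r / (4 * d)))).const_mul 4
  refine tendsto_biSup_nhds_zero_of_le (g := fun t => √(decay t))
    (fun _ _ _ => sum_nonneg fun _ _ => abs_nonneg _) (by simpa using hdecay.sqrt)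
    (fun _ => Real.sqrt_nonneg _) ?_
  filter_upwards [eventually_ge_atTop 1] with t ht p₀ hp₀
  exact Real.le_sqrt_of_sq_le
    (sq_l1dist_trajectory_le hskew hbound hr0 hr1 hpr hprz (hyΔ p₀ hp₀) (hyD p₀ hp₀) ht)

/-- For `r ∈ (0,1]`, the solutions `y^{(r)}(·,p₀)` of the replicator-mutation ODE converge
to the unique zero `p^{(r)}` of `f^{(r)}`, uniformly in the initial state `p₀ ∈ Δ`:
`lim_{t→∞} sup{ |y^{(r)}(t,p₀) − p^{(r)}| : p₀ ∈ Δ } = 0`. -/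
theorem stmt6 (d : ℕ) (hd : 1 ≤ d) (Mt : Matrix (Fin d) (Fin d) ℝ)
    (hskew : ∀ i j, Mt j i = - Mt i j) (hbound : ∀ i j, |Mt i j| ≤ 1)
    (r : ℝ) (hr0 : 0 < r) (hr1 : r ≤ 1)
    -- `pr` is the (unique) zero of `f^{(r)}` in the simplex
    (pr : Fin d → ℝ) (hpr : pr ∈ unitSimplex d) (hprz : fvec d Mt r pr = 0)
    (hpruniq : ∀ q ∈ unitSimplex d, fvec d Mt r q = 0 → q = pr)
    -- `y p₀` is the solution of `y' = f^{(r)}(y)` with `y(0) = p₀`, for each `p₀ ∈ Δ`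
    (y : (Fin d → ℝ) → ℝ → Fin d → ℝ)
    (hy0 : ∀ p₀ ∈ unitSimplex d, y p₀ 0 = p₀)
    (hyΔ : ∀ p₀ ∈ unitSimplex d, ∀ t ∈ Ici (0 : ℝ), y p₀ t ∈ unitSimplex d)
    (hyD : ∀ p₀ ∈ unitSimplex d, ∀ t ∈ Ici (0 : ℝ),
      HasDerivWithinAt (y p₀) (fvec d Mt r (y p₀ t)) (Ici 0) t) :
    Tendsto (fun t : ℝ => ⨆ p₀ ∈ unitSimplex d, l1dist (y p₀ t) pr) atTop (nhds 0) :=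
  stmt6_general d Mt hskew hbound r hr0 hr1 pr hpr hprz y hyΔ hyD
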